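/- arXiv:1404.6711 — 3 statements merged into one kernel-verified Lean document; each statement's English description precedes it below -/
import Mathlib

section
/- Let R be a commutative noetherian ring and let 𝒮 be a class of R-modules. If 𝒮 satisfies the C_{(x)} condition for every principal ideal (x) of R, then 𝒮 satisfies the C_𝔞 condition for every ideal 𝔞 of R. -/
/-!
A finitely generated ideal is a finite sum of principal ideals, so it suffices to show that
`C_I` and `C_J` imply `C_{I+J}`. If `M` is `(I+J)`-torsion, its submodule `L = (0 :_M I)` is
`J`-torsion and `(0 :_L J) = (0 :_M I+J)`; so `C_J` puts `L` in `𝒮`, and since `M` is also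
`I`-torsion, `C_I` puts `M` in `𝒮`.
-/

universe u

open Submodule

variable {R : Type u} [CommRing R]

/-- `Γ_a(M)`, the `a`-torsion submodule of `M`: the set of elements annihilated by
some power of the ideal `a`. -/
def torsionGamma (a : Ideal R) (M : Type u) [AddCommGroup M] [Module R M] :
    Submodule R M :=
  ⨆ n : ℕ, Submodule.torsionBySet R M ((a ^ n : Ideal R) : Set R)

/-- The class `S` satisfies the condition `C_a` on the module `M`:
if `Γ_a(M) = M` and `(0 :_M a) ∈ S` then `M ∈ S`. -/
def CCondOn (S : ModuleCat.{u} R → Prop) (a : Ideal R) (M : ModuleCat.{u} R) : Prop :=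
  torsionGamma a M = ⊤ →
    S (ModuleCat.of R (Submodule.torsionBySet R M (a : Set R))) → S M

/-- The class `S` satisfies the condition `C_a` (on every `R`-module). -/
def CCond (S : ModuleCat.{u} R → Prop) (a : Ideal R) : Prop :=
  ∀ M : ModuleCat.{u} R, CCondOn S a M

/-- The class `S` is closed under isomorphisms of `R`-modules. -/
def IsoClosed (S : ModuleCat.{u} R → Prop) : Prop :=
  ∀ ⦃M N : ModuleCat.{u} R⦄, (M ≃ₗ[R] N) → S M → S N

/-- `S` is a Serre subcategory of the category of `R`-modules: it is closed under
isomorphisms, contains the zero module, and is closed under submodules, quotient modules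
and extensions. -/
structure IsSerreClass (S : ModuleCat.{u} R → Prop) : Prop where
  iso : IsoClosed S
  zero : ∀ M : ModuleCat.{u} R, Subsingleton M → S M
  subobj : ∀ (M : ModuleCat.{u} R) (N : Submodule R M), S M → S (ModuleCat.of R N)
  quot : ∀ (M : ModuleCat.{u} R) (N : Submodule R M), S M → S (ModuleCat.of R (M ⧸ N))
  extension : ∀ (M : ModuleCat.{u} R) (N : Submodule R M),
    S (ModuleCat.of R N) → S (ModuleCat.of R (M ⧸ N)) → S M

lemma mem_torsionGamma_iff {a : Ideal R} {M : Type u} [AddCommGroup M] [Module R M] {m : M} :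
    m ∈ torsionGamma a M ↔ ∃ n : ℕ, m ∈ torsionBySet R M ↑(a ^ n) :=
  a.primaryComponent_mem M m

lemma torsionGamma_antitone {a b : Ideal R} (hba : b ≤ a) (M : Type u) [AddCommGroup M]
    [Module R M] : torsionGamma a M ≤ torsionGamma b M :=
  iSup_mono fun n ↦ torsionBySet_le_torsionBySet_of_subset (Ideal.pow_right_mono hba n)

lemma torsionGamma_submodule_eq_top {a : Ideal R} {M : Type u} [AddCommGroup M] [Module R M]
    (hM : torsionGamma a M = ⊤) (N : Submodule R M) : torsionGamma a N = ⊤ := by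
  refine eq_top_iff.mpr fun m _ ↦ ?_
  obtain ⟨n, hn⟩ := mem_torsionGamma_iff.mp (hM ▸ mem_top : (m : M) ∈ torsionGamma a M)
  refine mem_torsionGamma_iff.mpr ⟨n, (mem_torsionBySet_iff _ _).mpr fun r ↦ ?_⟩
  exact Subtype.ext ((mem_torsionBySet_iff _ _).mp hn r)

lemma map_subtype_torsionBySet_torsionBySet (I J : Ideal R) (M : Type u) [AddCommGroup M]
    [Module R M] :
    (torsionBySet R (torsionBySet R M I) J).map (torsionBySet R M I).subtype =
      torsionBySet R M ↑(I ⊔ J) := by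
  ext m
  simp only [mem_map, mem_torsionBySet_iff, Subtype.forall, SetLike.mem_coe]
  constructor
  · rintro ⟨⟨m, hmI⟩, hmJ, rfl⟩ r hr
    obtain ⟨y, hy, z, hz, rfl⟩ := mem_sup.mp hr
    have hym : y • m = 0 := (mem_torsionBySet_iff _ _).mp hmI ⟨y, hy⟩
    have hzm : z • m = 0 := congrArg Subtype.val (hmJ z hz)
    simp only [subtype_apply, add_smul, hym, hzm, add_zero]
  · intro hm
    refine ⟨⟨m, (mem_torsionBySet_iff _ _).mpr fun r ↦ hm r (mem_sup_left r.2)⟩,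
      fun r hr ↦ Subtype.ext (hm r (mem_sup_right hr)), rfl⟩

noncomputable def torsionBySetTorsionBySetEquiv (I J : Ideal R) (M : Type u) [AddCommGroup M]
    [Module R M] :
    torsionBySet R (torsionBySet R M I) J ≃ₗ[R] torsionBySet R M ↑(I ⊔ J) :=
  (equivMapOfInjective _ (subtype_injective _) _).trans
    (LinearEquiv.ofEq _ _ (map_subtype_torsionBySet_torsionBySet I J M))

theorem CCond.sup {S : ModuleCat.{u} R → Prop} (hiso : IsoClosed S) {I J : Ideal R}
    (hI : CCond S I) (hJ : CCond S J) : CCond S (I ⊔ J) := by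
  intro M hM hS
  have hL : S (ModuleCat.of R (torsionBySet R M I)) :=
    hJ _ (torsionGamma_submodule_eq_top
        (top_le_iff.mp (hM ▸ torsionGamma_antitone le_sup_right M)) _)
      (hiso (torsionBySetTorsionBySetEquiv I J M).symm hS)
  exact hI M (top_le_iff.mp (hM ▸ torsionGamma_antitone le_sup_left M)) hL

/-- If a class `S` satisfies the `C_{(x)}` condition for every principal ideal `(x)`,
then `S` satisfies the `C_a` condition for every ideal `a`. -/
theorem stmt4 [IsNoetherianRing R]
    (S : ModuleCat.{u} R → Prop)
    (hiso : IsoClosed S)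
    (h : ∀ x : R, CCond S (Ideal.span {x})) :
    ∀ a : Ideal R, CCond S a := by
  intro a
  induction a, IsNoetherian.noetherian a using Submodule.fg_induction with
  | singleton x => exact h x
  | sup I J _ _ hI hJ => exact hI.sup hiso hJ
end

section
/- Let R be a commutative artinian ring and let 𝒮 be a Serre subcategory of R-modules. Then 𝒮 satisfies the C_𝔞 condition for every ideal 𝔞 of R. -/
/-!
Over an artinian ring the powers of `a` stabilise, so an `a`-torsion module `M` is killed by a
fixed power `a ^ n`, and we induct on `n`. The ring is also noetherian (Hopkins–Levitzki), so `a`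
has generators `f₁, …, f_k`. The map `φ : m ↦ (fᵢ • m)ᵢ` has kernel `(0 :_M a)`, and its image
`L ≅ M ⧸ (0 :_M a)` is killed by `a ^ (n-1)` with `(0 :_L a) ⊆ (0 :_M a) ^ k ∈ 𝒮`. Induction gives
`L ∈ 𝒮`, and `M ∈ 𝒮` as an extension.
-/

universe u

open Submodule

variable {R : Type u} [CommRing R]

namespace IsSerreClass

variable {S : ModuleCat.{u} R → Prop} {M N : Type u} [AddCommGroup M] [Module R M]
  [AddCommGroup N] [Module R N]

theorem of_injective (hS : IsSerreClass S) (f : N →ₗ[R] M) (hf : Function.Injective f)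
    (hM : S (ModuleCat.of R M)) : S (ModuleCat.of R N) :=
  hS.iso (LinearEquiv.ofInjective f hf).symm (hS.subobj _ (LinearMap.range f) hM)

theorem of_ker_of_range (hS : IsSerreClass S) (f : M →ₗ[R] N)
    (hker : S (ModuleCat.of R (LinearMap.ker f)))
    (hrange : S (ModuleCat.of R (LinearMap.range f))) : S (ModuleCat.of R M) :=
  hS.extension (ModuleCat.of R M) (LinearMap.ker f) hker
    (hS.iso f.quotKerEquivRange.symm hrange)

theorem pi_fin (hS : IsSerreClass S) (hN : S (ModuleCat.of R N)) :
    ∀ k : ℕ, S (ModuleCat.of R (Fin k → N))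
  | 0 => hS.zero _ inferInstance
  | k + 1 => by
    refine hS.of_ker_of_range (LinearMap.proj 0) ?_ (hS.subobj _ _ hN)
    refine hS.of_injective ((LinearMap.funLeft R N Fin.succ).comp (LinearMap.ker _).subtype)
      (fun g h hgh => Subtype.ext (funext fun i => ?_)) (hS.pi_fin hN k)
    refine Fin.cases ?_ (fun j => congr_fun hgh j) i
    exact (LinearMap.mem_ker.mp g.2).trans (LinearMap.mem_ker.mp h.2).symm

end IsSerreClass

section Torsion

variable {ι : Type*} (f : ι → R) (M : Type*) [AddCommGroup M] [Module R M]

def piSmul : M →ₗ[R] ι → M :=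
  LinearMap.pi fun i => f i • LinearMap.id

theorem ker_piSmul {a : Ideal R} (hf : Ideal.span (Set.range f) = a) :
    LinearMap.ker (piSmul f M) = torsionBySet R M a := by
  ext m
  simp [piSmul, ← hf, ← torsionBySet_eq_torsionBySet_span, funext_iff]

theorem isTorsionBySet_range_piSmul {a : Ideal R} (hf : ∀ i, f i ∈ a) {n : ℕ}
    (hM : Module.IsTorsionBySet R M ↑(a ^ (n + 1))) :
    Module.IsTorsionBySet R (LinearMap.range (piSmul f M)) ↑(a ^ n) := by
  rintro ⟨_, m, rfl⟩ ⟨r, hr⟩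
  refine Subtype.ext (funext fun i => ?_)
  change r • f i • m = 0
  rw [smul_smul]
  exact hM (a := ⟨r * f i, pow_succ a n ▸ Ideal.mul_mem_mul hr (hf i)⟩)

def torsionBySetToPi (s : Set R) (P : Submodule R (ι → M)) :
    torsionBySet R P s →ₗ[R] ι → torsionBySet R M s :=
  LinearMap.pi fun i =>
    ((LinearMap.proj i).comp (P.subtype ∘ₗ (torsionBySet R P s).subtype)).codRestrict _
      fun x => (mem_torsionBySet_iff _ _).mpr fun r =>
        congr_fun (congrArg Subtype.val ((mem_torsionBySet_iff _ _).mp x.2 r)) i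

theorem torsionBySetToPi_injective (s : Set R) (P : Submodule R (ι → M)) :
    Function.Injective (torsionBySetToPi M s P) := fun _ _ hxy =>
  Subtype.ext <| Subtype.ext <| funext fun i => congrArg Subtype.val (congr_fun hxy i)

end Torsion

theorem IsSerreClass.of_isTorsionBySet_pow {S : ModuleCat.{u} R → Prop}
    (hS : IsSerreClass S) {a : Ideal R} (ha : a.FG) (n : ℕ)
    (M : Type u) [AddCommGroup M] [Module R M]
    (hM : Module.IsTorsionBySet R M ↑(a ^ n))
    (hsoc : S (ModuleCat.of R (torsionBySet R M a))) : S (ModuleCat.of R M) := by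
  obtain ⟨k, f, hf⟩ := fg_iff_exists_fin_generating_family.mp ha
  induction n generalizing M with
  | zero =>
    refine hS.zero _ (subsingleton_of_forall_eq 0 fun m => ?_)
    simpa using hM (a := ⟨1, by simp⟩) (x := m)
  | succ n ih =>
    refine hS.of_ker_of_range (piSmul f M)
      (hS.iso (LinearEquiv.ofEq _ _ (ker_piSmul f M hf).symm) hsoc) ?_
    refine ih _ (isTorsionBySet_range_piSmul f M (fun i => hf ▸ subset_span ⟨i, rfl⟩) hM) ?_
    exact hS.of_injective _ (torsionBySetToPi_injective M _ _) (hS.pi_fin hsoc k)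

theorem exists_torsionGamma_eq_torsionBySet_pow [IsArtinianRing R] (a : Ideal R) :
    ∃ n, ∀ (M : Type u) [AddCommGroup M] [Module R M],
      torsionGamma a M = torsionBySet R M ↑(a ^ n) := by
  obtain ⟨n, hn⟩ := IsArtinian.monotone_stabilizes (R := R) (M := R)
    ⟨fun k => OrderDual.toDual (a ^ k), fun _ _ h => Ideal.pow_le_pow_right h⟩
  refine ⟨n, fun M _ _ => le_antisymm (iSup_le fun k => ?_)
    (le_iSup (fun k => torsionBySet R M ↑(a ^ k)) n)⟩
  rcases le_total k n with h | h
  · exact torsionBySet_le_torsionBySet_pow k n h a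
  · rw [show a ^ n = a ^ k from hn k h]

/-- Over a commutative artinian ring, every Serre subcategory satisfies the `C_a`
condition for every ideal `a`. -/
theorem stmt10 [IsArtinianRing R]
    (S : ModuleCat.{u} R → Prop)
    (hS : IsSerreClass S) :
    ∀ a : Ideal R, CCond S a := by
  intro a M hΓ hsoc
  obtain ⟨n, hn⟩ := exists_torsionGamma_eq_torsionBySet_pow a
  exact hS.of_isTorsionBySet_pow (IsNoetherian.noetherian a) n M
    ((Module.isTorsionBySet_iff_torsionBySet_eq_top _).mpr (hn M ▸ hΓ)) hsoc
end

section
/- Let R be a commutative noetherian ring, let 𝔞 be an ideal of R, let 𝒮 be a Serre subcategory of R-modules, and let 𝒮_1, 𝒮_2 be classes of R-modules. If 𝒮 satisfies the C_𝔞 condition on every module in 𝒮_1 and on every module in 𝒮_2, then 𝒮 satisfies the C_𝔞 condition on every module in the extension class ⟨𝒮_1, 𝒮_2⟩. -/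
universe u

open Submodule

variable {R : Type u} [CommRing R]

/-- The extension class `⟨S₁, S₂⟩`: modules `M` possessing a submodule `N ∈ S₁`
with `M/N ∈ S₂`. -/
def extClass (S₁ S₂ : ModuleCat.{u} R → Prop) (M : ModuleCat.{u} R) : Prop :=
  ∃ N : Submodule R M, S₁ (ModuleCat.of R N) ∧ S₂ (ModuleCat.of R (M ⧸ N))

/-! If `N ⊆ M` is the given submodule, `N` inherits `Γ_𝔞(N) = N` and `(0 :_N 𝔞) ⊆ (0 :_M 𝔞) ∈ 𝒮`,
so `N ∈ 𝒮`. For `M/N` one needs `(0 :_{M/N} 𝔞) ∈ 𝒮`; this is where noetherianity enters.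
Choose generators `x₁, …, xₙ` of `𝔞` and let `φ : M → Mⁿ`, `m ↦ (xᵢ m)`, so that
`ker φ = (0 :_M 𝔞) ∈ 𝒮`. The preimage `K` of `(0 :_{M/N} 𝔞)` in `M` lies in `φ⁻¹(Nⁿ)`,
an extension of a submodule of `Nⁿ ∈ 𝒮` by `ker φ`, so `K ∈ 𝒮` and hence its image
`(0 :_{M/N} 𝔞) ∈ 𝒮`. Then `M/N ∈ 𝒮`, and `M ∈ 𝒮` as an extension. -/

section Torsion

variable {a : Ideal R} {A B : Type u} [AddCommGroup A] [Module R A] [AddCommGroup B]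
  [Module R B]

lemma mem_torsionGamma {m : A} : m ∈ torsionGamma a A ↔ ∃ n : ℕ, ∀ x ∈ a ^ n, x • m = 0 := by
  rw [torsionGamma, Submodule.mem_iSup_of_directed]
  · simp only [Submodule.mem_torsionBySet_iff, Subtype.forall, SetLike.mem_coe]
  · intro i j
    exact ⟨max i j, torsionBySet_le_torsionBySet_pow _ _ (le_max_left i j) a,
      torsionBySet_le_torsionBySet_pow _ _ (le_max_right i j) a⟩

lemma map_torsionGamma_le (f : A →ₗ[R] B) : (torsionGamma a A).map f ≤ torsionGamma a B := by
  rintro _ ⟨m, hm, rfl⟩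
  obtain ⟨n, hn⟩ := mem_torsionGamma.mp hm
  exact mem_torsionGamma.mpr ⟨n, fun x hx => by rw [← map_smul, hn x hx, map_zero]⟩

lemma comap_torsionGamma_le {f : A →ₗ[R] B} (hf : Function.Injective f) :
    (torsionGamma a B).comap f ≤ torsionGamma a A := by
  intro m hm
  obtain ⟨n, hn⟩ := mem_torsionGamma.mp hm
  exact mem_torsionGamma.mpr ⟨n, fun x hx => hf <| by rw [map_smul, hn x hx, map_zero]⟩

lemma torsionGamma_eq_top_of_surjective {f : A →ₗ[R] B} (hf : Function.Surjective f)
    (h : torsionGamma a A = ⊤) : torsionGamma a B = ⊤ :=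
  top_le_iff.mp <| by
    simpa only [h, Submodule.map_top, LinearMap.range_eq_top_of_surjective f hf]
      using map_torsionGamma_le (a := a) f

lemma torsionGamma_eq_top_of_injective {f : A →ₗ[R] B} (hf : Function.Injective f)
    (h : torsionGamma a B = ⊤) : torsionGamma a A = ⊤ :=
  top_le_iff.mp <| by simpa only [h, Submodule.comap_top] using comap_torsionGamma_le (a := a) hf

lemma torsionBySet_le_comap (f : A →ₗ[R] B) (s : Set R) :
    torsionBySet R A s ≤ (torsionBySet R B s).comap f := fun m hm =>
  (mem_torsionBySet_iff _ _).mpr fun x => by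
    rw [← map_smul, (mem_torsionBySet_iff _ _).mp hm x, map_zero]

end Torsion

namespace IsSerreClass

variable {S : ModuleCat.{u} R → Prop} (hS : IsSerreClass S)
  {M A B : Type u} [AddCommGroup M] [Module R M] [AddCommGroup A] [Module R A]
  [AddCommGroup B] [Module R B]
include hS

lemma of_injective_s13 {f : A →ₗ[R] B} (hf : Function.Injective f) (hB : S (ModuleCat.of R B)) :
    S (ModuleCat.of R A) :=
  hS.iso (LinearEquiv.ofInjective f hf).symm (hS.subobj (ModuleCat.of R B) _ hB)

lemma of_surjective {f : A →ₗ[R] B} (hf : Function.Surjective f) (hA : S (ModuleCat.of R A)) :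
    S (ModuleCat.of R B) :=
  hS.iso (f.quotKerEquivOfSurjective hf) (hS.quot (ModuleCat.of R A) _ hA)

lemma of_le {p q : Submodule R M} (hpq : p ≤ q) (hq : S (ModuleCat.of R q)) :
    S (ModuleCat.of R p) :=
  hS.of_injective_s13 (Submodule.inclusion_injective hpq) hq

lemma map (f : M →ₗ[R] A) {p : Submodule R M} (hp : S (ModuleCat.of R p)) :
    S (ModuleCat.of R (p.map f)) :=
  hS.of_surjective (f.submoduleMap_surjective p) hp

lemma of_ker_of_codomain (f : M →ₗ[R] A) (hker : S (ModuleCat.of R (LinearMap.ker f)))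
    (hA : S (ModuleCat.of R A)) : S (ModuleCat.of R M) :=
  hS.extension (ModuleCat.of R M) (LinearMap.ker f) hker <|
    hS.of_injective_s13 (f := f.range.subtype ∘ₗ f.quotKerEquivRange.toLinearMap)
      (f.range.injective_subtype.comp f.quotKerEquivRange.injective) hA

lemma comap (f : M →ₗ[R] A) {p : Submodule R A} (hker : S (ModuleCat.of R (LinearMap.ker f)))
    (hp : S (ModuleCat.of R p)) : S (ModuleCat.of R (p.comap f)) := by
  refine hS.of_ker_of_codomain (f.restrict fun _ h => h) ?_ hp
  refine hS.of_injective_s13 (f := (p.comap f).subtype.restrict fun m hm => ?_) ?_ hker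
  · simpa [Subtype.ext_iff] using hm
  · intro m m' h
    ext
    simpa using congrArg Subtype.val h

lemma comap_of_injective {f : M →ₗ[R] A} (hf : Function.Injective f) {p : Submodule R A}
    (hp : S (ModuleCat.of R p)) : S (ModuleCat.of R (p.comap f)) :=
  hS.comap f (hS.zero _ (LinearMap.ker_eq_bot.mpr hf ▸ inferInstance)) hp

lemma pi (hA : S (ModuleCat.of R A)) : ∀ n : ℕ, S (ModuleCat.of R (Fin n → A))
  | 0 => hS.zero _ inferInstanceAs (Subsingleton (Fin 0 → A))
  | n + 1 => by
    refine hS.of_ker_of_codomain (LinearMap.funLeft R A Fin.succ) ?_ (pi hA n)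
    refine hS.of_injective_s13 (f := LinearMap.proj 0 ∘ₗ (LinearMap.ker _).subtype) ?_ hA
    -- a kernel element vanishes at every `Fin.succ j`, so it is determined by its value at `0`
    intro g h hgh
    ext i
    induction i using Fin.cases with
    | zero => exact hgh
    | succ j => exact (congrFun g.2 j).trans (congrFun h.2 j).symm

lemma torsionBySet_quotient {a : Ideal R} (ha : a.FG) (N : Submodule R M)
    (hN : S (ModuleCat.of R N)) (hT : S (ModuleCat.of R (torsionBySet R M a))) :
    S (ModuleCat.of R (torsionBySet R (M ⧸ N) a)) := by
  obtain ⟨n, x, hx⟩ := Submodule.fg_iff_exists_fin_generating_family.mp ha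
  let φ : M →ₗ[R] Fin n → M := LinearMap.pi fun i => x i • LinearMap.id
  have hker : LinearMap.ker φ = torsionBySet R M a := by
    ext m
    rw [← hx, ← torsionBySet_eq_torsionBySet_span]
    simp [φ, funext_iff, mem_torsionBySet_iff]
  let ι : (Fin n → N) →ₗ[R] Fin n → M := N.subtype.compLeft (Fin n)
  have hι : Function.Injective ι := N.injective_subtype.comp_left
  have hK : (torsionBySet R (M ⧸ N) a).comap N.mkQ ≤ (LinearMap.range ι).comap φ := by
    intro m hm
    have hxm : ∀ i, x i • m ∈ N := fun i => by
      rw [← Submodule.Quotient.mk_eq_zero]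
      exact (mem_torsionBySet_iff _ _).mp hm ⟨x i, hx ▸ Ideal.subset_span ⟨i, rfl⟩⟩
    exact ⟨fun i => ⟨x i • m, hxm i⟩, rfl⟩
  rw [← Submodule.map_comap_eq_of_surjective N.mkQ_surjective (torsionBySet R (M ⧸ N) a)]
  exact hS.map _ <| hS.of_le hK <|
    hS.comap φ (hker ▸ hT) (hS.iso (LinearEquiv.ofInjective ι hι) (hS.pi hN n))

end IsSerreClass

/-- If a Serre subcategory `S` satisfies the `C_a` condition on every module in `S₁` and
on every module in `S₂`, then it satisfies `C_a` on every module in `⟨S₁, S₂⟩`. -/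
theorem stmt13 [IsNoetherianRing R] (a : Ideal R)
    (S S₁ S₂ : ModuleCat.{u} R → Prop)
    (hS : IsSerreClass S)
    (h₁ : ∀ M : ModuleCat.{u} R, S₁ M → CCondOn S a M)
    (h₂ : ∀ M : ModuleCat.{u} R, S₂ M → CCondOn S a M) :
    ∀ M : ModuleCat.{u} R, extClass S₁ S₂ M → CCondOn S a M := by
  rintro M ⟨N, hN₁, hN₂⟩ hM hT
  have hN : S (ModuleCat.of R N) :=
    h₁ _ hN₁ (torsionGamma_eq_top_of_injective N.injective_subtype hM)
      (hS.of_le (torsionBySet_le_comap N.subtype a) (hS.comap_of_injective N.injective_subtype hT))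
  have hQ : S (ModuleCat.of R (M ⧸ N)) :=
    h₂ _ hN₂ (torsionGamma_eq_top_of_surjective N.mkQ_surjective hM)
      (hS.torsionBySet_quotient (IsNoetherian.noetherian a) N hN hT)
  exact hS.extension M N hN hQ
end
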